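/- arXiv:2409.01244 — 2 statements merged into one kernel-verified Lean document; each statement's English description precedes it below -/
import Mathlib

section
/- Let m ≥ 4 and w > 0 be real, and let L_2 be the m×m matrix whose (1,1)-entry is m-1+w, whose first row and first column off-diagonal entries are all -1, and which equals the identity on the remaining diagonal entries (zero elsewhere off the first row/column). Then the spectrum of L_2 is {β⁻, 1, β⁺}, where β± are the two roots of λ² - (m+w)λ + w = 0; the eigenvalues β⁻ and β⁺ are simple and the eigenvalue 1 has multiplicity m-2. -/
/-!
With the hub listed first, `x • 1 - L₂` is an arrowhead matrix whose lower-right block is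
`(x - 1) • 1`. For `x ≠ 1` its Schur complement gives
`det = (x - 1) ^ (m - 1) * (x - (m - 1 + w) - (m - 1) / (x - 1))
     = (x ^ 2 - (m + w) * x + w) * (x - 1) ^ (m - 2)`,
and two polynomials agreeing off `x = 1` are equal, so this is the characteristic polynomial.
The roots `β±` of the quadratic factor satisfy `(1 - β⁻) (1 - β⁺) = 1 - m < 0`, hence
`β⁻ < 1 < β⁺` and the three roots are distinct.
-/

open Real Matrix Polynomial

/-- `L₂ = L_{S_m} + D_C`: (0,0)-entry `m-1+w`, first row/column off-diagonal `-1`,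
identity on the remaining diagonal. -/
def starPlus (m : ℕ) (w : ℝ) : Matrix (Fin m) (Fin m) ℝ :=
  fun i j =>
    if i.val = 0 ∧ j.val = 0 then (m : ℝ) - 1 + w
    else if i.val = 0 ∨ j.val = 0 then -1
    else if i = j then 1 else 0

/-- smaller root of `λ² - (m+w)λ + w`. -/
noncomputable def betaMinus (m : ℕ) (w : ℝ) : ℝ :=
  (((m : ℝ) + w) - Real.sqrt (((m : ℝ) + w) ^ 2 - 4 * w)) / 2

/-- larger root of `λ² - (m+w)λ + w`. -/
noncomputable def betaPlus (m : ℕ) (w : ℝ) : ℝ :=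
  (((m : ℝ) + w) + Real.sqrt (((m : ℝ) + w) ^ 2 - 4 * w)) / 2

theorem det_fromBlocks_arrowhead {K n : Type*} [Field K] [Fintype n] [DecidableEq n]
    (a c : K) (hc : c ≠ 0) :
    (fromBlocks (of fun _ _ : Fin 1 => a) (of fun _ (_ : n) => (1 : K)) (of fun (_ : n) _ => 1)
      (c • 1)).det = c ^ Fintype.card n * (a - Fintype.card n / c) := by
  have hinv : (c • (1 : Matrix n n K)) * (c⁻¹ • 1) = 1 := by simp [smul_smul, hc]
  let := invertibleOfRightInverse _ _ hinv
  rw [det_fromBlocks₂₂, invOf_eq_right_inv hinv, det_smul, det_one, det_fin_one]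
  simp [mul_apply, div_eq_mul_inv]

theorem Matrix.mem_spectrum_iff_mem_roots_charpoly {K n : Type*} [Field K] [Fintype n]
    [DecidableEq n] (A : Matrix n n K) {r : K} : r ∈ spectrum K A ↔ r ∈ A.charpoly.roots := by
  rw [mem_spectrum_iff_isRoot_charpoly, mem_roots A.charpoly_monic.ne_zero]

def finOneSumEquiv (n : ℕ) : Fin 1 ⊕ Fin n ≃ Fin (n + 1) :=
  finSumFinEquiv.trans (finCongr (Nat.add_comm 1 n))

theorem scalar_sub_starPlus_submatrix (n : ℕ) (w x : ℝ) :
    (scalar (Fin (n + 1)) x - starPlus (n + 1) w).submatrix (finOneSumEquiv n) (finOneSumEquiv n) =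
      fromBlocks (of fun _ _ => x - (n + w)) (of fun _ _ => 1) (of fun _ _ => 1) ((x - 1) • 1) := by
  ext (i | i) (j | j) <;>
    simp [starPlus, finOneSumEquiv, Fin.ext_iff, one_apply, diagonal_apply, ite_sub_ite]

theorem eval_charpoly_starPlus (n : ℕ) (w : ℝ) {x : ℝ} (hx : x ≠ 1) :
    (starPlus (n + 1) w).charpoly.eval x = (x - 1) ^ n * (x - (n + w) - n / (x - 1)) := by
  rw [eval_charpoly, ← det_submatrix_equiv_self (finOneSumEquiv n), scalar_sub_starPlus_submatrix,
    det_fromBlocks_arrowhead _ _ (sub_ne_zero.2 hx), Fintype.card_fin]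

theorem charpoly_starPlus {m : ℕ} (hm : 2 ≤ m) (w : ℝ) :
    (starPlus m w).charpoly = (X ^ 2 - C ((m : ℝ) + w) * X + C w) * (X - 1) ^ (m - 2) := by
  obtain ⟨n, rfl⟩ : ∃ n, m = n + 2 := ⟨m - 2, by omega⟩
  refine eq_of_infinite_eval_eq _ _ ((Set.finite_singleton (1 : ℝ)).infinite_compl.mono ?_)
  intro x (hx : x ≠ 1)
  have hx' : x - 1 ≠ 0 := sub_ne_zero.2 hx
  simp only [Set.mem_ofPred_eq, eval_charpoly_starPlus (n + 1) w hx, eval_mul, eval_pow, eval_sub,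
    eval_add, eval_X, eval_C, eval_one, Nat.add_sub_cancel]
  push_cast
  field_simp
  ring

theorem discrim_starPlus_pos {m : ℕ} (hm : 2 ≤ m) (w : ℝ) : 0 < ((m : ℝ) + w) ^ 2 - 4 * w := by
  have hm' : (2 : ℝ) ≤ m := by exact_mod_cast hm
  nlinarith [sq_nonneg (w + m - 2)]

theorem betaMinus_add_betaPlus (m : ℕ) (w : ℝ) : betaMinus m w + betaPlus m w = m + w := by
  unfold betaMinus betaPlus
  ring

theorem betaMinus_mul_betaPlus {m : ℕ} (hm : 2 ≤ m) (w : ℝ) : betaMinus m w * betaPlus m w = w := by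
  unfold betaMinus betaPlus
  linear_combination (-1 / 4 : ℝ) * Real.sq_sqrt (discrim_starPlus_pos hm w).le

theorem betaMinus_lt_one_lt_betaPlus {m : ℕ} (hm : 2 ≤ m) (w : ℝ) :
    betaMinus m w < 1 ∧ 1 < betaPlus m w := by
  have hm' : (2 : ℝ) ≤ m := by exact_mod_cast hm
  have hprod : (1 - betaMinus m w) * (1 - betaPlus m w) = 1 - m := by
    linear_combination betaMinus_mul_betaPlus hm w - betaMinus_add_betaPlus m w
  have hle : betaMinus m w ≤ betaPlus m w := by
    unfold betaMinus betaPlus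
    linarith [Real.sqrt_nonneg (((m : ℝ) + w) ^ 2 - 4 * w)]
  constructor <;> nlinarith

theorem quadratic_starPlus_eq {m : ℕ} (hm : 2 ≤ m) (w : ℝ) :
    (X ^ 2 - C ((m : ℝ) + w) * X + C w : ℝ[X]) =
      (X - C (betaMinus m w)) * (X - C (betaPlus m w)) := by
  have hsum : C ((m : ℝ) + w) = C (betaMinus m w) + C (betaPlus m w) := by
    rw [← C_add, betaMinus_add_betaPlus]
  have hprod : C w = C (betaMinus m w) * C (betaPlus m w) := by
    rw [← C_mul, betaMinus_mul_betaPlus hm]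
  rw [hsum, hprod]
  ring

theorem charpoly_starPlus_eq_prod {m : ℕ} (hm : 2 ≤ m) (w : ℝ) :
    (starPlus m w).charpoly =
      ((betaMinus m w ::ₘ betaPlus m w ::ₘ Multiset.replicate (m - 2) 1).map (X - C ·)).prod := by
  rw [charpoly_starPlus hm, quadratic_starPlus_eq hm]
  simp [mul_assoc]

theorem stmt1_general (m : ℕ) (hm : 4 ≤ m) (w : ℝ) :
    spectrum ℝ (starPlus m w) = {betaMinus m w, 1, betaPlus m w} ∧
    (starPlus m w).charpoly.rootMultiplicity (betaMinus m w) = 1 ∧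
    (starPlus m w).charpoly.rootMultiplicity (betaPlus m w) = 1 ∧
    (starPlus m w).charpoly.rootMultiplicity 1 = m - 2 := by
  have hroots : (starPlus m w).charpoly.roots =
      betaMinus m w ::ₘ betaPlus m w ::ₘ Multiset.replicate (m - 2) 1 := by
    rw [charpoly_starPlus_eq_prod (by omega), roots_multiset_prod_X_sub_C]
  obtain ⟨hlt, hgt⟩ := betaMinus_lt_one_lt_betaPlus (by omega : 2 ≤ m) w
  refine ⟨?_, ?_, ?_, ?_⟩
  · ext x
    simp only [mem_spectrum_iff_mem_roots_charpoly, hroots, Multiset.mem_cons,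
      Multiset.mem_replicate, show m - 2 ≠ 0 by omega, Ne, not_false_eq_true, true_and,
      Set.mem_insert_iff, Set.mem_singleton_iff]
    tauto
  all_goals rw [← count_roots, hroots]
  · simp [Multiset.mem_replicate, hlt.ne, (hlt.trans hgt).ne]
  · simp [Multiset.mem_replicate, hgt.ne', (hlt.trans hgt).ne']
  · simp [hlt.ne', hgt.ne]

theorem stmt1 (m : ℕ) (hm : 4 ≤ m) (w : ℝ) (hw : 0 < w) :
    spectrum ℝ (starPlus m w) = {betaMinus m w, 1, betaPlus m w} ∧
    (starPlus m w).charpoly.rootMultiplicity (betaMinus m w) = 1 ∧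
    (starPlus m w).charpoly.rootMultiplicity (betaPlus m w) = 1 ∧
    (starPlus m w).charpoly.rootMultiplicity 1 = m - 2 :=
  stmt1_general m hm w
end

section
/- With M(λ) as above, if there exists 1 ≤ i ≤ m-1 with X_i(1) ≠ 1, then the kernel of M(1) (the space of v with M(1)v = 0) and the left kernel (the space of v with vᵀM(1) = 0) each have dimension m-2; moreover every vector in either kernel has first coordinate v_0 = 0. -/
/-!
At `λ = 1` the lower-right block of `M(1)` vanishes, so `M(1)` is supported on its first row and
first column. For such a matrix every row `i ≠ 0` of `M v` equals `M i 0 * v 0`; as the first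
column has a nonzero entry below the diagonal, `M v = 0` forces `v 0 = 0`, and the kernel is then
cut out by the two functionals `v ↦ v 0` and `v ↦ (M v) 0`. These are independent as soon as the
first row has a nonzero entry off the diagonal, which is where `X i 1 ≠ 1` enters, so the kernel
has codimension two. The transpose is of the same shape, with the roles of row and column swapped.
-/

open Matrix

/-- The matrix `M(λ)` of Lemma B.2. -/
def MmatX (m : ℕ) (X : ℕ → ℝ → ℝ) (lam : ℝ) : Matrix (Fin m) (Fin m) ℝ :=
  fun i j =>
    if i.val = 0 ∧ j.val = 0 then (m : ℝ) - lam + X 0 lam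
    else if i.val = 0 then -1 + X j.val lam
    else if j.val = 0 then 1
    else if i = j then 1 - lam else 0

namespace Matrix

variable {K n : Type*} [Field K]

def SupportedOnCross (A : Matrix n n K) (p : n) : Prop :=
  ∀ i j, i ≠ p → j ≠ p → A i j = 0

namespace SupportedOnCross

variable {A : Matrix n n K} {p : n}

theorem transpose (hA : A.SupportedOnCross p) : Aᵀ.SupportedOnCross p :=
  fun i j hi hj => hA j i hj hi

variable [Fintype n]

theorem mulVec_apply (hA : A.SupportedOnCross p) (v : n → K) {i : n} (hi : i ≠ p) :
    (A *ᵥ v) i = A i p * v p := by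
  rw [mulVec, dotProduct, Fintype.sum_eq_single p fun j hj => by rw [hA i j hi hj, zero_mul]]

theorem apply_eq_zero_of_mulVec_eq_zero (hA : A.SupportedOnCross p) {a : n} (ha : a ≠ p)
    (hap : A a p ≠ 0) {v : n → K} (hv : A *ᵥ v = 0) : v p = 0 := by
  have h := congrFun hv a
  rw [hA.mulVec_apply v ha, Pi.zero_apply] at h
  exact (mul_eq_zero.mp h).resolve_left hap

theorem ker_mulVecLin (hA : A.SupportedOnCross p) {a : n} (ha : a ≠ p) (hap : A a p ≠ 0) :
    LinearMap.ker A.mulVecLin =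
      LinearMap.ker ((LinearMap.proj p).prod ((LinearMap.proj p).comp A.mulVecLin)) := by
  ext v
  change A *ᵥ v = 0 ↔ (v p, (A *ᵥ v) p) = 0
  rw [Prod.mk_eq_zero]
  constructor
  · intro hv
    exact ⟨hA.apply_eq_zero_of_mulVec_eq_zero ha hap hv, congrFun hv p⟩
  · rintro ⟨hvp, hAvp⟩
    funext i
    by_cases hi : i = p
    · rw [hi, hAvp, Pi.zero_apply]
    · rw [hA.mulVec_apply v hi, hvp, mul_zero, Pi.zero_apply]

end SupportedOnCross

variable [Fintype n] [DecidableEq n]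

theorem surjective_proj_prod_proj_comp_mulVecLin (A : Matrix n n K) {p b : n} (hb : b ≠ p)
    (hpb : A p b ≠ 0) :
    Function.Surjective ((LinearMap.proj p).prod ((LinearMap.proj p).comp A.mulVecLin)) := by
  rintro ⟨x, y⟩
  refine ⟨Pi.single p x + Pi.single b ((y - A p p * x) / A p b), Prod.ext ?_ ?_⟩
  · simp [Pi.single_eq_of_ne' hb]
  · simp only [LinearMap.prod_apply, LinearMap.coe_comp, LinearMap.coe_proj, Function.prod_apply,
      Function.comp_apply, Function.eval, mulVecLin_apply, mulVec_add, mulVec_single,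
      Pi.add_apply, Pi.smul_apply, col_apply, op_smul_eq_mul]
    field_simp
    ring

theorem SupportedOnCross.finrank_ker_mulVecLin {A : Matrix n n K} {p : n}
    (hA : A.SupportedOnCross p) {a b : n} (ha : a ≠ p) (hap : A a p ≠ 0) (hb : b ≠ p)
    (hpb : A p b ≠ 0) :
    Module.finrank K (LinearMap.ker A.mulVecLin) = Fintype.card n - 2 := by
  have h := LinearMap.finrank_range_add_finrank_ker
    ((LinearMap.proj p).prod ((LinearMap.proj p).comp A.mulVecLin))
  rw [LinearMap.range_eq_top.mpr (A.surjective_proj_prod_proj_comp_mulVecLin hb hpb),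
    finrank_top, Module.finrank_prod, Module.finrank_self, Module.finrank_fintype_fun_eq_card,
    ← hA.ker_mulVecLin ha hap] at h
  omega

end Matrix

theorem MmatX_one_supportedOnCross (m : ℕ) (X : ℕ → ℝ → ℝ) (hm : 0 < m) :
    (MmatX m X 1).SupportedOnCross ⟨0, hm⟩ := by
  intro i j hi hj
  have hi : i.val ≠ 0 := fun h => hi (Fin.ext h)
  have hj : j.val ≠ 0 := fun h => hj (Fin.ext h)
  simp [MmatX, hi, hj]

theorem stmt11 (m : ℕ) (hm : 4 ≤ m) (X : ℕ → ℝ → ℝ)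
    (hX : ∃ i : ℕ, 1 ≤ i ∧ i ≤ m - 1 ∧ X i 1 ≠ 1) :
    Module.finrank ℝ (LinearMap.ker (MmatX m X 1).mulVecLin) = m - 2 ∧
    Module.finrank ℝ (LinearMap.ker ((MmatX m X 1)ᵀ).mulVecLin) = m - 2 ∧
    (∀ v ∈ LinearMap.ker (MmatX m X 1).mulVecLin, v ⟨0, by omega⟩ = 0) ∧
    (∀ v ∈ LinearMap.ker ((MmatX m X 1)ᵀ).mulVecLin, v ⟨0, by omega⟩ = 0) := by
  obtain ⟨i, hi1, him, hXi⟩ := hX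
  have hA := MmatX_one_supportedOnCross m X (by omega)
  set p : Fin m := ⟨0, by omega⟩
  set a : Fin m := ⟨1, by omega⟩
  set b : Fin m := ⟨i, by omega⟩
  have ha : a ≠ p := Fin.ne_of_val_ne one_ne_zero
  have hi0 : i ≠ 0 := by omega
  have hb : b ≠ p := Fin.ne_of_val_ne hi0
  have hap : MmatX m X 1 a p ≠ 0 := by simp [MmatX, a, p]
  have hpb : MmatX m X 1 p b ≠ 0 := by
    simpa [MmatX, b, p, hi0, neg_add_eq_zero] using hXi.symm
  refine ⟨?_, ?_, fun v hv => ?_, fun v hv => ?_⟩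
  · simpa using hA.finrank_ker_mulVecLin ha hap hb hpb
  · simpa using hA.transpose.finrank_ker_mulVecLin hb hpb ha hap
  · exact hA.apply_eq_zero_of_mulVec_eq_zero ha hap hv
  · exact hA.transpose.apply_eq_zero_of_mulVec_eq_zero hb hpb hv
end
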